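/- Hoeffding upper-tail bound for the binomial distribution: Let n ≥ 1, p ∈ [0,1], and let X be distributed according to the binomial distribution with n trials and success probability p. Then for every real k with n·p ≤ k, the probability that X ≥ k is at most exp(−2·(n·p − k)²/n). -/

import Mathlib

/-!
Chernoff: for every `t ≥ 0`, the upper tail is at most `e^{-tk} (1 - p + p e^t)^n`, and Hoeffding's
lemma for a Bernoulli variable bounds `1 - p + p e^t` by `e^{pt + t²/8}`. The resulting exponent
`-t(k - np) + nt²/8` is minimised at `t = 4(k - np)/n`, where it equals `-2(np - k)²/n`.
-/

open Finset Real MeasureTheory ProbabilityTheory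

set_option linter.deprecated false

theorem one_sub_add_mul_exp_le_exp {p : ℝ} (hp0 : 0 ≤ p) (hp1 : p ≤ 1) (t : ℝ) :
    1 - p + p * exp t ≤ exp (p * t + t ^ 2 / 8) := by
  set μ : Measure ℝ := bernoulliMeasure 1 0 ⟨p, hp0, hp1⟩
  have hmean : μ[id] = p := by simp [μ, integral_bernoulliMeasure]
  have hmgf : mgf (fun x => id x - μ[id]) μ t = exp (-(p * t)) * (1 - p + p * exp t) := by
    rw [hmean, mgf, integral_bernoulliMeasure]
    simp only [id, smul_eq_mul]
    rw [show t * (1 - p) = -(p * t) + t by ring, show t * (0 - p) = -(p * t) by ring, exp_add]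
    ring
  have hsupport : ∀ᵐ x ∂μ, id x ∈ Set.Icc (0 : ℝ) 1 := ae_iff.mpr <|
    bernoulliMeasure_apply_of_notMem_of_notMem _ measurableSet_Icc.compl (by simp) (by simp)
  have hoeffding := (hasSubgaussianMGF_of_mem_Icc aemeasurable_id hsupport).mgf_le t
  rw [hmgf] at hoeffding
  calc 1 - p + p * exp t = exp (p * t) * (exp (-(p * t)) * (1 - p + p * exp t)) := by
        rw [← mul_assoc, ← exp_add, add_neg_cancel, exp_zero, one_mul]
    _ ≤ exp (p * t) * exp (t ^ 2 / 8) := by gcongr; exact hoeffding.trans_eq (by norm_num; ring_nf)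
    _ = _ := by rw [exp_add]

theorem sum_choose_mul_pow_upper_tail_le {a b : ℝ} (ha : 0 ≤ a) (hb : 0 ≤ b) (n : ℕ) (k : ℝ)
    {t : ℝ} (ht : 0 ≤ t) :
    ∑ j ∈ range (n + 1), (if k ≤ j then n.choose j * a ^ j * b ^ (n - j) else 0)
      ≤ exp (-(t * k)) * (a * exp t + b) ^ n := by
  rw [add_pow, mul_sum]
  refine sum_le_sum fun j _ => ?_
  have hterm : 0 ≤ n.choose j * a ^ j * b ^ (n - j) := by positivity
  rw [mul_pow, ← exp_nat_mul]
  split_ifs with hkj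
  · calc (n.choose j * a ^ j * b ^ (n - j) : ℝ)
        ≤ n.choose j * a ^ j * b ^ (n - j) * exp (t * (j - k)) :=
          le_mul_of_one_le_right hterm (one_le_exp (mul_nonneg ht (sub_nonneg.mpr hkj)))
      _ = _ := by rw [mul_sub, sub_eq_neg_add, exp_add]; ring_nf
  · positivity

theorem PMF.binomial_apply_eq_ofReal {p : ℝ} (hp0 : 0 ≤ p) (hp1 : p ≤ 1) (n : ℕ) (j : Fin (n + 1)) :
    PMF.binomial p.toNNReal (Real.toNNReal_le_one.mpr hp1) n j
      = ENNReal.ofReal (n.choose j * p ^ (j : ℕ) * (1 - p) ^ (n - j)) := by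
  rw [PMF.binomial_apply, Fin.val_last, ENNReal.ofReal_mul (by positivity),
    ENNReal.ofReal_mul (by positivity), ENNReal.ofReal_pow hp0, ENNReal.ofReal_pow (by linarith),
    ENNReal.ofReal_sub _ hp0, ENNReal.ofReal_one, ENNReal.ofReal_natCast]
  unfold ENNReal.ofReal
  ring

theorem PMF.binomial_upper_tail_eq_ofReal {p : ℝ} (hp0 : 0 ≤ p) (hp1 : p ≤ 1) (n : ℕ) (k : ℝ) :
    (∑ j : Fin (n + 1),
        if k ≤ (j : ℝ) then PMF.binomial p.toNNReal (Real.toNNReal_le_one.mpr hp1) n j else 0)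
      = ENNReal.ofReal (∑ j ∈ range (n + 1),
          if k ≤ j then n.choose j * p ^ j * (1 - p) ^ (n - j) else 0) := by
  have hp1' : 0 ≤ 1 - p := sub_nonneg.mpr hp1
  rw [ENNReal.ofReal_sum_of_nonneg fun j _ => by split_ifs <;> positivity,
    ← Fin.sum_univ_eq_sum_range]
  refine sum_congr rfl fun j _ => ?_
  split_ifs <;> simp [PMF.binomial_apply_eq_ofReal hp0 hp1]

theorem binomial_upper_tail (n : ℕ) (p : ℝ) (hp0 : 0 ≤ p) (hp1 : p ≤ 1)
    (k : ℝ) (hk : n * p ≤ k) :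
    (∑ j : Fin (n + 1),
        if k ≤ (j : ℝ) then
          PMF.binomial (Real.toNNReal p) (Real.toNNReal_le_one.mpr hp1) n j
        else 0)
      ≤ ENNReal.ofReal (Real.exp (-2 * (n * p - k) ^ 2 / n)) := by
  rw [PMF.binomial_upper_tail_eq_ofReal hp0 hp1]
  refine ENNReal.ofReal_le_ofReal ?_
  set t := 4 * (k - n * p) / n with ht
  have ht0 : 0 ≤ t := div_nonneg (by linarith) n.cast_nonneg
  calc _ ≤ exp (-(t * k)) * (p * exp t + (1 - p)) ^ n :=
        sum_choose_mul_pow_upper_tail_le hp0 (sub_nonneg.mpr hp1) n k ht0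
    _ ≤ exp (-(t * k)) * exp (p * t + t ^ 2 / 8) ^ n := by
        have := one_sub_add_mul_exp_le_exp hp0 hp1 t
        gcongr
        linarith
    _ = exp (-2 * (n * p - k) ^ 2 / n) := by
        rw [← exp_nat_mul, ← exp_add]
        congr 1
        -- for `n = 0` both sides vanish, since then `t = 4k / 0 = 0`
        rcases n.eq_zero_or_pos with rfl | hn
        · simp [ht]
        · rw [ht]; field_simp; ring
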